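/- arXiv:2102.10318 — 5 statements merged into one kernel-verified Lean document; each statement's English description precedes it below -/
import Mathlib

section
/- For elements A, B of a Banach algebra, real numbers a > 0, b > 0, c > 0 and every t ≥ 0, the doubly indexed family ( Q_{k,m}^{A,B} · t^{ka+mb} / Γ(ka+mb+c) )_{(k,m) ∈ ℕ×ℕ} is summable in norm; hence the bivariate Mittag-Leffler type operator function 𝓔_{a,b,c}^{A,B}(t) = ∑_{k=0}^∞ ∑_{m=0}^∞ Q_{k,m}^{A,B} t^{ka+mb} / Γ(ka+mb+c) is well defined. -/
/-!
`Q A B k m` is the sum of the `(k + m).choose m` words with `k` letters `A` and `m` letters `B`,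
so `‖Q A B k m‖ ≤ (2‖A‖)^k (2‖B‖)^m`. Bounding the Euler integral from below on `(R, R + 1]` gives
`R^z ≤ (R + 1) e^(R + 1) Γ(z)` for every `R ≥ 0`, hence the `(k, m)` term is at most a constant
times `(2‖A‖ (t/R)^a)^k (2‖B‖ (t/R)^b)^m`. For `R` large both ratios are below `1`, and a product
of two geometric series is summable.
-/

/-- The operators `Q_{k,m}^{A,B}` from the paper: `Q k 0 = A^k`, `Q 0 m = B^m`, and
`Q k m = ∑_{l=0}^{k} A^{k-l} B Q l (m-1)` for `m ≥ 1`. -/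
noncomputable def Q {𝔸 : Type*} [Ring 𝔸] (A B : 𝔸) : ℕ → ℕ → 𝔸
  | k, 0 => A ^ k
  | k, m + 1 => ∑ l ∈ Finset.range (k + 1), A ^ (k - l) * B * Q A B l m

open Real Set MeasureTheory Filter Topology

namespace Real

theorem rpow_le_mul_Gamma {R z : ℝ} (hR : 0 ≤ R) (hz : 0 < z) :
    R ^ z ≤ (R + 1) * exp (R + 1) * Gamma z := by
  have hsub : Ioc R (R + 1) ⊆ Ioi 0 := Ioc_subset_Ioi_self.trans (Ioi_subset_Ioi hR)
  have hlow : ∀ x ∈ Ioc R (R + 1),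
      exp (-(R + 1)) * (R ^ z / (R + 1)) ≤ exp (-x) * x ^ (z - 1) := by
    rintro x ⟨hRx, hxR⟩
    have hx : 0 < x := hR.trans_lt hRx
    rw [rpow_sub_one hx.ne']
    gcongr
  have hint : exp (-(R + 1)) * (R ^ z / (R + 1)) ≤
      ∫ x in Ioc R (R + 1), exp (-x) * x ^ (z - 1) := by
    simpa using setIntegral_ge_of_const_le measurableSet_Ioc (by simp) hlow
      ((GammaIntegral_convergent hz).mono_set hsub)
  have hmono : ∫ x in Ioc R (R + 1), exp (-x) * x ^ (z - 1) ≤ Gamma z := by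
    rw [Gamma_eq_integral hz]
    refine setIntegral_mono_set (GammaIntegral_convergent hz) ?_ hsub.eventuallyLE
    filter_upwards [ae_restrict_mem measurableSet_Ioi] with x hx
    exact mul_nonneg (exp_pos _).le (rpow_nonneg (le_of_lt hx) _)
  have h := hint.trans hmono
  rw [exp_neg] at h
  field_simp at h ⊢
  linarith

theorem rpow_div_Gamma_le {t R x c : ℝ} (ht : 0 ≤ t) (hR : 0 < R) (hx : 0 ≤ x) (hc : 0 < c) :
    t ^ x / Gamma (x + c) ≤ (R + 1) * exp (R + 1) / R ^ c * (t / R) ^ x := by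
  have hΓ : 0 < Gamma (x + c) := Gamma_pos_of_pos (by positivity)
  have hRxc : 0 < R ^ x * R ^ c := by positivity
  have hbound := rpow_le_mul_Gamma hR.le (show 0 < x + c by positivity)
  rw [rpow_add hR] at hbound
  rw [div_rpow ht hR.le, div_le_iff₀ hΓ]
  calc t ^ x = t ^ x / (R ^ x * R ^ c) * (R ^ x * R ^ c) := by field_simp
    _ ≤ t ^ x / (R ^ x * R ^ c) * ((R + 1) * exp (R + 1) * Gamma (x + c)) := by gcongr
    _ = _ := by field_simp

theorem rpow_natCast_mul_add {s : ℝ} (hs : 0 ≤ s) {a b : ℝ} (ha : 0 ≤ a) (hb : 0 ≤ b) (k m : ℕ) :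
    s ^ ((k : ℝ) * a + m * b) = (s ^ a) ^ k * (s ^ b) ^ m := by
  rw [rpow_add_of_nonneg hs (by positivity) (by positivity), mul_comm (k : ℝ), mul_comm (m : ℝ),
    rpow_mul_natCast hs, rpow_mul_natCast hs]

theorem tendsto_div_rpow_atTop (t : ℝ) {a : ℝ} (ha : 0 < a) :
    Tendsto (fun R : ℝ => (t / R) ^ a) atTop (𝓝 0) := by
  simpa [zero_rpow ha.ne'] using
    (tendsto_const_nhds.div_atTop tendsto_id).rpow_const (p := a) (Or.inr ha.le)

end Real

section
variable {𝔸 : Type*} [NormedRing 𝔸] [NormOneClass 𝔸] (A B : 𝔸)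

theorem norm_Q_le (k m : ℕ) : ‖Q A B k m‖ ≤ (k + m).choose m * ‖A‖ ^ k * ‖B‖ ^ m := by
  induction m generalizing k with
  | zero => simpa [Q] using norm_pow_le A k
  | succ m ih =>
    have hterm : ∀ l ∈ Finset.range (k + 1), ‖A ^ (k - l) * B * Q A B l m‖ ≤
        (l + m).choose m * (‖A‖ ^ k * ‖B‖ ^ (m + 1)) := by
      intro l hl
      have hlk : l ≤ k := Nat.lt_succ_iff.mp (Finset.mem_range.mp hl)
      calc ‖A ^ (k - l) * B * Q A B l m‖
          ≤ ‖A‖ ^ (k - l) * ‖B‖ * ((l + m).choose m * ‖A‖ ^ l * ‖B‖ ^ m) := by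
            grw [norm_mul_le, norm_mul_le, norm_pow_le, ih]
        _ = (l + m).choose m * (‖A‖ ^ (k - l + l) * ‖B‖ ^ (m + 1)) := by ring
        _ = _ := by rw [Nat.sub_add_cancel hlk]
    calc ‖Q A B k (m + 1)‖ ≤ ∑ l ∈ Finset.range (k + 1), ‖A ^ (k - l) * B * Q A B l m‖ :=
          norm_sum_le _ _
      _ ≤ ∑ l ∈ Finset.range (k + 1), (l + m).choose m * (‖A‖ ^ k * ‖B‖ ^ (m + 1)) :=
          Finset.sum_le_sum hterm
      _ = _ := by
          rw [← Finset.sum_mul, ← Nat.cast_sum, Nat.sum_range_add_choose, ← add_assoc, mul_assoc]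

theorem norm_Q_le_two_mul_pow (k m : ℕ) : ‖Q A B k m‖ ≤ (2 * ‖A‖) ^ k * (2 * ‖B‖) ^ m := by
  calc ‖Q A B k m‖ ≤ (k + m).choose m * ‖A‖ ^ k * ‖B‖ ^ m := norm_Q_le A B k m
    _ ≤ (2 : ℝ) ^ (k + m) * ‖A‖ ^ k * ‖B‖ ^ m := by
        gcongr
        exact_mod_cast Nat.choose_le_two_pow _ _
    _ = (2 * ‖A‖) ^ k * (2 * ‖B‖) ^ m := by ring
end

theorem summable_mittagLeffler_Q_general {𝔸 : Type*} [NormedRing 𝔸] [NormOneClass 𝔸]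
    [NormedAlgebra ℝ 𝔸] (A B : 𝔸) (a b c : ℝ)
    (ha : 0 < a) (hb : 0 < b) (hc : 0 < c) (t : ℝ) (ht : 0 ≤ t) :
    Summable (fun p : ℕ × ℕ =>
      ‖(t ^ ((p.1 : ℝ) * a + (p.2 : ℝ) * b) /
          Real.Gamma ((p.1 : ℝ) * a + (p.2 : ℝ) * b + c)) • Q A B p.1 p.2‖) := by
  obtain ⟨R, hR, hqA, hqB⟩ :
      ∃ R : ℝ, 0 < R ∧ 2 * ‖A‖ * (t / R) ^ a < 1 ∧ 2 * ‖B‖ * (t / R) ^ b < 1 := by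
    have hA := (tendsto_div_rpow_atTop t ha).const_mul (2 * ‖A‖)
    have hB := (tendsto_div_rpow_atTop t hb).const_mul (2 * ‖B‖)
    rw [mul_zero] at hA hB
    exact ((eventually_gt_atTop 0).and ((hA.eventually (gt_mem_nhds one_pos)).and
      (hB.eventually (gt_mem_nhds one_pos)))).exists
  have hs : 0 ≤ t / R := div_nonneg ht hR.le
  have hgeom : Summable fun p : ℕ × ℕ =>
      (2 * ‖A‖ * (t / R) ^ a) ^ p.1 * (2 * ‖B‖ * (t / R) ^ b) ^ p.2 :=
    (summable_geometric_of_lt_one (by positivity) hqA).mul_of_nonneg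
      (summable_geometric_of_lt_one (by positivity) hqB) (fun _ => by positivity)
      (fun _ => by positivity)
  refine (hgeom.mul_left ((R + 1) * exp (R + 1) / R ^ c)).of_nonneg_of_le
    (fun _ => norm_nonneg _) fun ⟨k, m⟩ => ?_
  have hx : 0 ≤ (k : ℝ) * a + m * b := by positivity
  rw [norm_smul, Real.norm_of_nonneg
    (div_nonneg (rpow_nonneg ht _) (Gamma_pos_of_pos (by positivity)).le)]
  calc _ ≤ (R + 1) * exp (R + 1) / R ^ c * (t / R) ^ ((k : ℝ) * a + m * b) *
        ((2 * ‖A‖) ^ k * (2 * ‖B‖) ^ m) :=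
        mul_le_mul (rpow_div_Gamma_le ht hR hx hc) (norm_Q_le_two_mul_pow A B k m)
          (norm_nonneg _) (by positivity)
    _ = _ := by rw [rpow_natCast_mul_add hs ha.le hb.le]; ring

/-- For `a, b, c > 0` and `t ≥ 0`, the family
`Q_{k,m}^{A,B} t^{ka+mb} / Γ(ka+mb+c)`, `(k,m) ∈ ℕ × ℕ`, is summable in norm, so the bivariate
Mittag-Leffler type operator function `𝓔_{a,b,c}^{A,B}(t)` is well defined. -/
theorem summable_mittagLeffler_Q {𝔸 : Type*} [NormedRing 𝔸] [NormOneClass 𝔸]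
    [NormedAlgebra ℝ 𝔸] [CompleteSpace 𝔸] (A B : 𝔸) (a b c : ℝ)
    (ha : 0 < a) (hb : 0 < b) (hc : 0 < c) (t : ℝ) (ht : 0 ≤ t) :
    Summable (fun p : ℕ × ℕ =>
      ‖(t ^ ((p.1 : ℝ) * a + (p.2 : ℝ) * b) /
          Real.Gamma ((p.1 : ℝ) * a + (p.2 : ℝ) * b + c)) • Q A B p.1 p.2‖) :=
  summable_mittagLeffler_Q_general A B a b c ha hb hc t ht
end

section
/- Let α > 0, β > 0, γ ∈ ℝ, λ ∈ ℝ, and let s > 0 be a real number with |λ| < s^α. Then the Laplace transform of the three-parameter (Prabhakar) Mittag-Leffler function satisfies ∫₀^∞ e^{−st} t^{β−1} E_{α,β}^{γ}(λ t^{α}) dt = s^{−β} (1 − λ s^{−α})^{−γ}. -/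
open MeasureTheory

/-- The three-parameter (Prabhakar) Mittag-Leffler function
`E_{α,β}^{γ}(z) = ∑_{k=0}^∞ (γ)_k z^k / (k! Γ(kα+β))`. -/
noncomputable def prabhakarML (α β γ z : ℝ) : ℝ :=
  ∑' k : ℕ, (ascPochhammer ℝ k).eval γ * z ^ k / ((k.factorial : ℝ) * Real.Gamma (k * α + β))

open Real Set

/-! For `t > 0`, `t^(β-1) E^γ_{α,β}(λ t^α) = ∑ₖ (γ)ₖ λᵏ / k! · t^(kα+β-1) / Γ(kα+β)`, and
Euler's integral turns each `t^(a-1) / Γ(a)` into `s^(-a)` under the Laplace transform.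
Integrating termwise therefore gives `s^(-β) ∑ₖ (γ)ₖ / k! · (λ s^(-α))ᵏ`, the binomial series of
`s^(-β) (1 - λ s^(-α))^(-γ)`. Termwise integration is legitimate because the same computation
with absolute values of the coefficients yields a convergent series: the binomial series
converges absolutely on `|λ s^(-α)| < 1`. -/
theorem Ring.choose_add_natCast_sub_one_eq {K : Type*} [Field K] [CharZero K] (a : K) (n : ℕ) :
    Ring.choose (a + n - 1) n = (ascPochhammer K n).eval a / n.factorial := by
  rw [← Ring.multichoose_eq, eq_div_iff (by exact_mod_cast n.factorial_ne_zero), mul_comm,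
    ← nsmul_eq_mul, Ring.factorial_nsmul_multichoose_eq_ascPochhammer,
    Polynomial.ascPochhammer_smeval_eq_eval]

theorem mem_eball_one_of_abs_lt_one {x : ℝ} (hx : |x| < 1) : x ∈ Metric.eball (0 : ℝ) 1 := by
  rw [mem_eball_zero_iff, Real.enorm_eq_ofReal_abs]
  exact ENNReal.ofReal_lt_one.mpr hx

theorem hasSum_ascPochhammer_div_factorial_mul_pow (a : ℝ) {x : ℝ} (hx : |x| < 1) :
    HasSum (fun n => (ascPochhammer ℝ n).eval a / n.factorial * x ^ n) ((1 - x) ^ (-a)) := by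
  have := (Real.one_div_one_sub_rpow_hasFPowerSeriesOnBall_zero a).hasSum
    (mem_eball_one_of_abs_lt_one hx)
  simp only [FormalMultilinearSeries.ofScalars_apply_eq, zero_add, smul_eq_mul,
    Ring.choose_add_natCast_sub_one_eq] at this
  rwa [Real.rpow_neg (by linarith [(abs_lt.mp hx).2]), inv_eq_one_div]

theorem summable_abs_ascPochhammer_div_factorial_mul_pow (a : ℝ) {x : ℝ} (hx : |x| < 1) :
    Summable (fun n => |(ascPochhammer ℝ n).eval a / n.factorial| * |x| ^ n) := by
  have hseries := Real.one_div_one_sub_rpow_hasFPowerSeriesOnBall_zero a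
  have := FormalMultilinearSeries.summable_norm_apply _
    (Metric.eball_subset_eball hseries.r_le (mem_eball_one_of_abs_lt_one hx))
  simpa only [FormalMultilinearSeries.ofScalars_apply_eq, Ring.choose_add_natCast_sub_one_eq,
    smul_eq_mul, norm_mul, norm_pow, Real.norm_eq_abs] using this

section Laplace

variable {s : ℝ}

theorem integral_exp_neg_mul_mul_rpow_div_Gamma {a : ℝ} (ha : 0 < a) (hs : 0 < s) :
    ∫ t in Ioi 0, exp (-(s * t)) * (t ^ (a - 1) / Gamma a) = s ^ (-a) := by
  simp_rw [mul_div_assoc', mul_comm (exp _)]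
  rw [integral_div, integral_rpow_mul_exp_neg_mul_Ioi ha hs, one_div, inv_rpow hs.le,
    rpow_neg hs.le, mul_div_cancel_right₀ _ (Gamma_pos_of_pos ha).ne']

theorem integrableOn_exp_neg_mul_mul_rpow_div_Gamma {a : ℝ} (ha : 0 < a) (hs : 0 < s) :
    IntegrableOn (fun t => exp (-(s * t)) * (t ^ (a - 1) / Gamma a)) (Ioi 0) :=
  Integrable.of_integral_ne_zero <| by
    rw [integral_exp_neg_mul_mul_rpow_div_Gamma ha hs]; positivity

theorem integral_exp_neg_mul_mul_tsum_rpow_div_Gamma {c a : ℕ → ℝ} (ha : ∀ k, 0 < a k)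
    (hs : 0 < s) (hc : Summable fun k => |c k| * s ^ (-a k)) :
    ∫ t in Ioi 0, exp (-(s * t)) * ∑' k, c k * (t ^ (a k - 1) / Gamma (a k)) =
      ∑' k, c k * s ^ (-a k) := by
  set F : ℕ → ℝ → ℝ := fun k t => c k * (exp (-(s * t)) * (t ^ (a k - 1) / Gamma (a k)))
  have norm_F : ∀ k, ∀ t ∈ Ioi (0 : ℝ),
      ‖F k t‖ = |c k| * (exp (-(s * t)) * (t ^ (a k - 1) / Gamma (a k))) := fun k t ht => by
    rw [norm_mul, Real.norm_eq_abs, Real.norm_of_nonneg]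
    exact mul_nonneg (exp_pos _).le
      (div_nonneg (rpow_nonneg (le_of_lt ht) _) (Gamma_pos_of_pos (ha k)).le)
  have integral_norm_F : ∀ k, ∫ t in Ioi 0, ‖F k t‖ = |c k| * s ^ (-a k) := fun k => by
    rw [setIntegral_congr_fun measurableSet_Ioi (norm_F k), integral_const_mul,
      integral_exp_neg_mul_mul_rpow_div_Gamma (ha k) hs]
  calc ∫ t in Ioi 0, exp (-(s * t)) * ∑' k, c k * (t ^ (a k - 1) / Gamma (a k))
      = ∫ t in Ioi 0, ∑' k, F k t := by
        simp_rw [F, ← tsum_mul_left, mul_left_comm (exp _)]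
    _ = ∑' k, ∫ t in Ioi 0, F k t :=
        (integral_tsum_of_summable_integral_norm
          (fun k => (integrableOn_exp_neg_mul_mul_rpow_div_Gamma (ha k) hs).const_mul (c k))
          (hc.congr fun k => (integral_norm_F k).symm)).symm
    _ = ∑' k, c k * s ^ (-a k) := by
        simp_rw [F, integral_const_mul, integral_exp_neg_mul_mul_rpow_div_Gamma (ha _) hs]

end Laplace

theorem rpow_sub_one_mul_prabhakarML (α β γ lam : ℝ) {t : ℝ} (ht : 0 < t) :
    t ^ (β - 1) * prabhakarML α β γ (lam * t ^ α) =
      ∑' k : ℕ, (ascPochhammer ℝ k).eval γ / k.factorial * lam ^ k *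
        (t ^ (k * α + β - 1) / Gamma (k * α + β)) := by
  rw [prabhakarML, ← tsum_mul_left]
  refine tsum_congr fun k => ?_
  rw [show k * α + β - 1 = α * k + (β - 1) by ring, rpow_add ht, rpow_mul_natCast ht.le]
  ring

theorem rpow_neg_natCast_mul_add {s : ℝ} (hs : 0 < s) (α β : ℝ) (k : ℕ) :
    s ^ (-(k * α + β)) = s ^ (-β) * (s ^ (-α)) ^ k := by
  rw [← rpow_mul_natCast hs.le, ← rpow_add hs]
  ring_nf

/-- Laplace transform of the three-parameter Mittag-Leffler function:
`∫₀^∞ e^{−st} t^{β−1} E_{α,β}^{γ}(λ t^α) dt = s^{−β} (1 − λ s^{−α})^{−γ}`. -/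
theorem laplace_prabhakarML (α β γ lam s : ℝ) (hα : 0 < α) (hβ : 0 < β) (hs : 0 < s)
    (hlam : |lam| < s ^ α) :
    ∫ t in Set.Ioi (0 : ℝ), Real.exp (-(s * t)) * t ^ (β - 1) * prabhakarML α β γ (lam * t ^ α)
      = s ^ (-β) * (1 - lam * s ^ (-α)) ^ (-γ) := by
  set x := lam * s ^ (-α)
  have hx : |x| < 1 := by
    rwa [abs_mul, abs_of_pos (rpow_pos_of_pos hs _), rpow_neg hs.le, ← div_eq_mul_inv,
      div_lt_one (rpow_pos_of_pos hs _)]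
  set c : ℕ → ℝ := fun k => (ascPochhammer ℝ k).eval γ / k.factorial * lam ^ k
  have coeff : ∀ k : ℕ, c k * s ^ (-(k * α + β)) =
      s ^ (-β) * ((ascPochhammer ℝ k).eval γ / k.factorial * x ^ k) :=
    fun k => by rw [rpow_neg_natCast_mul_add hs]; ring
  have coeff_abs : ∀ k : ℕ, |c k| * s ^ (-(k * α + β)) =
      s ^ (-β) * (|(ascPochhammer ℝ k).eval γ / k.factorial| * |x| ^ k) := fun k => by
    rw [rpow_neg_natCast_mul_add hs, abs_mul, abs_mul, abs_pow,
      abs_of_pos (rpow_pos_of_pos hs (-α))]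
    ring
  have summable_c : Summable fun k : ℕ => |c k| * s ^ (-(k * α + β)) :=
    ((summable_abs_ascPochhammer_div_factorial_mul_pow γ hx).mul_left _).congr
      fun k => (coeff_abs k).symm
  rw [setIntegral_congr_fun measurableSet_Ioi fun t ht => by
      rw [mul_assoc, rpow_sub_one_mul_prabhakarML α β γ lam ht],
    integral_exp_neg_mul_mul_tsum_rpow_div_Gamma (fun k => by positivity) hs summable_c,
    tsum_congr coeff, tsum_mul_left, (hasSum_ascPochhammer_div_factorial_mul_pow γ hx).tsum_eq]
end

section
/- Let A, B be elements of a Banach algebra, let ρ > 0, a > 0, b > 0 be real, and let t > 0. Then ∫₀ᵗ (t−s)^{a−1} E_{ρ,a}(A(t−s)^{ρ}) · B · s^{b−1} E_{ρ,b}(A s^{ρ}) ds = ∑_{k=0}^∞ ( ∑_{l=0}^{k} A^{k−l} B A^{l} ) · t^{kρ+a+b−1} / Γ(kρ+a+b), where the integral is a Bochner integral. -/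
/-!
Write `k_α(u) = u ^ (α - 1) / Γ(α)` for the Riemann–Liouville kernel. For `u > 0` one has
`u ^ (c - 1) E_{ρ,c}(u ^ ρ A) = ∑ₘ k_{mρ+c}(u) Aᵐ`, so by the Cauchy product the integrand is
`∑ₖ ∑_{m+n=k} k_{mρ+a}(t - s) k_{nρ+b}(s) Aᵐ B Aⁿ`. The Beta integral is the semigroup law
`∫₀ᵗ k_α(t - s) k_β(s) ds = k_{α+β}(t)`, so integrating term by term turns the `k`-th inner sum
into `k_{kρ+a+b}(t) ∑_{m+n=k} Aᵐ B Aⁿ`. Term-by-term integration is legitimate because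
`Γ(x + ρ) ≥ (x - 1) ^ ρ Γ(x)` (log-convexity of `Γ`), which makes `∑ₖ (k + 1) Cᵏ / Γ(kρ + c)`
converge for every `C`.
-/

open MeasureTheory Real Filter Finset

noncomputable def mlTwo {𝔸 : Type*} [NormedRing 𝔸] [NormedAlgebra ℝ 𝔸] (a c : ℝ) (T : 𝔸) : 𝔸 :=
  ∑' k : ℕ, (Real.Gamma ((k : ℝ) * a + c))⁻¹ • T ^ k

/-- `log Γ` is convex and its slope on `[x - 1, x]` is `log (x - 1)`. -/
theorem Real.rpow_sub_one_mul_Gamma_le_Gamma_add {x ρ : ℝ} (hx : 1 < x) (hρ : 0 < ρ) :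
    (x - 1) ^ ρ * Gamma x ≤ Gamma (x + ρ) := by
  have hx1 : 0 < x - 1 := by linarith
  have hslope := convexOn_log_Gamma.slope_mono_adjacent (x := x - 1) (y := x) (z := x + ρ)
    (Set.mem_Ioi.2 hx1) (Set.mem_Ioi.2 (by linarith)) (by linarith) (by linarith)
  have hΓ : Gamma x = (x - 1) * Gamma (x - 1) := by
    simpa using Gamma_add_one hx1.ne'
  have hpos : 0 < Gamma (x - 1) := Gamma_pos_of_pos hx1
  simp only [Function.comp_apply, sub_sub_cancel, div_one, add_sub_cancel_left] at hslope
  rw [hΓ, log_mul hx1.ne' hpos.ne', add_sub_cancel_right, le_div_iff₀ hρ] at hslope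
  rw [← exp_log (Gamma_pos_of_pos (by linarith : 0 < x + ρ)), ← exp_log (rpow_pos_of_pos hx1 ρ),
    ← exp_log (Gamma_pos_of_pos (by linarith : 0 < x)), ← exp_add, exp_le_exp, log_rpow hx1, hΓ,
    log_mul hx1.ne' hpos.ne']
  linarith

theorem summable_pow_div_Gamma_nat_mul_add {ρ : ℝ} (hρ : 0 < ρ) (C c : ℝ) :
    Summable fun k : ℕ => C ^ k / Gamma (k * ρ + c) := by
  have hlin : Tendsto (fun k : ℕ => (k : ℝ) * ρ + c - 1) atTop atTop :=
    tendsto_atTop_add_const_right _ _ <| tendsto_atTop_add_const_right _ _ <|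
      tendsto_natCast_atTop_atTop.atTop_mul_const hρ
  refine summable_of_ratio_norm_eventually_le (r := 1 / 2) (by norm_num) ?_
  filter_upwards [((tendsto_rpow_atTop hρ).comp hlin).eventually_ge_atTop (2 * |C|),
    hlin.eventually_gt_atTop 0] with k hgrow hx
  set x := (k : ℝ) * ρ + c
  have hq : 0 < (x - 1) ^ ρ := rpow_pos_of_pos hx ρ
  have hΓ : 0 < Gamma x := Gamma_pos_of_pos (by linarith)
  have hΓρ : (x - 1) ^ ρ * Gamma x ≤ Gamma (x + ρ) :=
    rpow_sub_one_mul_Gamma_le_Gamma_add (by linarith) hρ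
  rw [Nat.cast_succ, show ((k : ℝ) + 1) * ρ + c = x + ρ by ring, norm_div, norm_div, norm_pow,
    norm_pow, Real.norm_eq_abs, norm_of_nonneg hΓ.le, norm_of_nonneg (by nlinarith)]
  calc |C| ^ (k + 1) / Gamma (x + ρ) ≤ |C| ^ k * ((x - 1) ^ ρ / 2) / ((x - 1) ^ ρ * Gamma x) := by
        rw [pow_succ]; gcongr; linarith [show 2 * |C| ≤ (x - 1) ^ ρ from hgrow]
    _ = 1 / 2 * (|C| ^ k / Gamma x) := by field_simp

theorem summable_succ_mul_pow_div_Gamma_nat_mul_add {ρ : ℝ} (hρ : 0 < ρ) (C c : ℝ) :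
    Summable fun k : ℕ => (k + 1) * C ^ k / Gamma (k * ρ + c) := by
  refine .of_norm_bounded (summable_abs_iff.2 (summable_pow_div_Gamma_nat_mul_add hρ (2 * C) c))
    fun k => ?_
  rw [Real.norm_eq_abs, abs_div, abs_div, abs_mul, mul_pow, abs_mul]
  gcongr
  exact_mod_cast Nat.lt_two_pow_self

theorem integral_sub_rpow_mul_rpow {α β t : ℝ} (hα : 0 < α) (hβ : 0 < β) (ht : 0 < t) :
    ∫ s in 0..t, (t - s) ^ (α - 1) * s ^ (β - 1) =
      Gamma α * Gamma β / Gamma (α + β) * t ^ (α + β - 1) := by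
  apply Complex.ofReal_injective
  have hcongr : ∫ s in 0..t, (((t - s) ^ (α - 1) * s ^ (β - 1) : ℝ) : ℂ) =
      ∫ s in 0..t, (s : ℂ) ^ ((β : ℂ) - 1) * ((t : ℂ) - s) ^ ((α : ℂ) - 1) := by
    refine intervalIntegral.integral_congr fun s hs => ?_
    rw [Set.uIcc_of_le ht.le] at hs
    rw [Complex.ofReal_mul, Complex.ofReal_cpow hs.1, Complex.ofReal_cpow (sub_nonneg.2 hs.2)]
    push_cast
    ring
  rw [← intervalIntegral.integral_ofReal, hcongr, Complex.betaIntegral_scaled _ _ ht,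
    Complex.betaIntegral_eq_Gamma_mul_div _ _ (by simpa) (by simpa)]
  push_cast [Complex.ofReal_cpow ht.le, ← Complex.Gamma_ofReal]
  ring_nf

noncomputable def rlKernel (α u : ℝ) : ℝ := u ^ (α - 1) / Gamma α

theorem rlKernel_nonneg {α u : ℝ} (hα : 0 < α) (hu : 0 ≤ u) : 0 ≤ rlKernel α u :=
  div_nonneg (rpow_nonneg hu _) (Gamma_pos_of_pos hα).le

theorem rlKernel_nat_mul_add {u : ℝ} (hu : 0 < u) (ρ c : ℝ) (m : ℕ) :
    rlKernel (m * ρ + c) u = u ^ (c - 1) * (u ^ ρ) ^ m / Gamma (m * ρ + c) := by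
  rw [rlKernel, ← rpow_natCast, ← rpow_mul hu.le, add_sub_assoc, rpow_add hu, mul_comm ρ, mul_comm]

theorem setIntegral_rlKernel_sub_mul_rlKernel {α β t : ℝ} (hα : 0 < α) (hβ : 0 < β)
    (ht : 0 < t) : ∫ s in Set.Ioo 0 t, rlKernel α (t - s) * rlKernel β s = rlKernel (α + β) t := by
  have hΓα := (Gamma_pos_of_pos hα).ne'
  have hΓβ := (Gamma_pos_of_pos hβ).ne'
  rw [← integral_Ioc_eq_integral_Ioo, ← intervalIntegral.integral_of_le ht.le]
  simp only [rlKernel, div_mul_div_comm, intervalIntegral.integral_div,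
    integral_sub_rpow_mul_rpow hα hβ ht]
  field_simp

theorem integrableOn_rlKernel_sub_mul_rlKernel {α β t : ℝ} (hα : 0 < α) (hβ : 0 < β)
    (ht : 0 < t) : IntegrableOn (fun s => rlKernel α (t - s) * rlKernel β s) (Set.Ioo 0 t) :=
  .of_integral_ne_zero <| by
    rw [setIntegral_rlKernel_sub_mul_rlKernel hα hβ ht]
    exact (div_pos (rpow_pos_of_pos ht _) (Gamma_pos_of_pos (add_pos hα hβ))).ne'

section BanachAlgebra

variable {𝔸 : Type*} [NormedRing 𝔸]

/-- Unlike `norm_pow_le`, this needs no `NormOneClass`: for `n = 0` both sides are `‖X‖`. -/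
theorem norm_pow_mul_le (A X : 𝔸) (n : ℕ) : ‖A ^ n * X‖ ≤ ‖A‖ ^ n * ‖X‖ := by
  induction n with
  | zero => simp
  | succ n ih =>
    rw [pow_succ', mul_assoc, pow_succ', mul_assoc]
    exact (norm_mul_le _ _).trans (mul_le_mul_of_nonneg_left ih (norm_nonneg A))

theorem norm_mul_pow_le (X A : 𝔸) (n : ℕ) : ‖X * A ^ n‖ ≤ ‖X‖ * ‖A‖ ^ n := by
  induction n with
  | zero => simp
  | succ n ih =>
    rw [pow_succ, ← mul_assoc, pow_succ, ← mul_assoc]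
    exact (norm_mul_le _ _).trans (mul_le_mul_of_nonneg_right ih (norm_nonneg A))

theorem sum_antidiagonal_pow_mul_mul_pow (A B : 𝔸) (k : ℕ) :
    ∑ p ∈ antidiagonal k, A ^ p.1 * B * A ^ p.2 = ∑ l ∈ range (k + 1), A ^ (k - l) * B * A ^ l := by
  rw [← Nat.sum_antidiagonal_swap]
  exact Nat.sum_antidiagonal_eq_sum_range_succ (fun i j => A ^ j * B * A ^ i) k

variable [NormedAlgebra ℝ 𝔸]

theorem summable_norm_rlKernel_smul_pow {ρ : ℝ} (hρ : 0 < ρ) (c : ℝ) {u : ℝ} (hu : 0 < u)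
    (A : 𝔸) : Summable fun m : ℕ => ‖rlKernel (m * ρ + c) u • A ^ m‖ := by
  refine .of_nonneg_of_le (fun _ => norm_nonneg _) (fun m => ?_)
    ((summable_abs_iff.2 (summable_pow_div_Gamma_nat_mul_add hρ (u ^ ρ * ‖A‖) c)).mul_left
      (u ^ (c - 1) * ‖(1 : 𝔸)‖))
  calc ‖rlKernel (m * ρ + c) u • A ^ m‖ ≤ |rlKernel (m * ρ + c) u| * (‖A‖ ^ m * ‖(1 : 𝔸)‖) := by
        rw [norm_smul, Real.norm_eq_abs, ← mul_one (A ^ m)]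
        gcongr
        exact norm_pow_mul_le A 1 m
    _ = u ^ (c - 1) * ‖(1 : 𝔸)‖ * |(u ^ ρ * ‖A‖) ^ m / Gamma (m * ρ + c)| := by
        rw [rlKernel_nat_mul_add hu, abs_div, abs_div, abs_mul, mul_pow, abs_mul,
          abs_of_pos (rpow_pos_of_pos hu _), abs_of_nonneg (by positivity : 0 ≤ (u ^ ρ) ^ m),
          abs_of_nonneg (by positivity : 0 ≤ ‖A‖ ^ m)]
        ring

theorem rpow_smul_mlTwo_rpow_smul {u : ℝ} (hu : 0 < u) (ρ c : ℝ) (A : 𝔸) :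
    u ^ (c - 1) • mlTwo ρ c (u ^ ρ • A) = ∑' m : ℕ, rlKernel (m * ρ + c) u • A ^ m := by
  rw [mlTwo, ← tsum_const_smul'']
  refine tsum_congr fun m => ?_
  rw [rlKernel_nat_mul_add hu, smul_pow, smul_smul, smul_smul, div_eq_mul_inv]
  ring_nf

theorem tsum_smul_mul_mul_tsum_smul [CompleteSpace 𝔸] {f g : ℕ → ℝ} {x y : ℕ → 𝔸}
    (hf : Summable fun m => ‖f m • x m‖) (hg : Summable fun n => ‖g n • y n‖) (B : 𝔸) :
    (∑' m, f m • x m) * B * ∑' n, g n • y n =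
      ∑' k, ∑ p ∈ antidiagonal k, (f p.1 * g p.2) • (x p.1 * B * y p.2) := by
  have hfB : Summable fun m => ‖f m • x m * B‖ :=
    .of_nonneg_of_le (fun _ => norm_nonneg _) (fun _ => norm_mul_le _ _) (hf.mul_right ‖B‖)
  rw [← hf.of_norm.tsum_mul_right, tsum_mul_tsum_eq_tsum_sum_antidiagonal_of_summable_norm hfB hg]
  simp only [smul_mul_assoc, mul_smul_comm, smul_smul, mul_comm (g _)]

variable (A B : 𝔸) (ρ a b t : ℝ)

noncomputable def mlConvTerm (k : ℕ) (s : ℝ) : 𝔸 :=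
  ∑ p ∈ antidiagonal k,
    (rlKernel (p.1 * ρ + a) (t - s) * rlKernel (p.2 * ρ + b) s) • (A ^ p.1 * B * A ^ p.2)

variable {ρ a b t}

theorem smul_mlTwo_mul_mlTwo_eq_tsum_mlConvTerm [CompleteSpace 𝔸] (hρ : 0 < ρ) {s : ℝ}
    (hs : s ∈ Set.Ioo 0 t) :
    ((t - s) ^ (a - 1) * s ^ (b - 1)) • (mlTwo ρ a ((t - s) ^ ρ • A) * B * mlTwo ρ b (s ^ ρ • A)) =
      ∑' k, mlConvTerm A B ρ a b t k s := by
  have hts : 0 < t - s := sub_pos.2 hs.2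
  rw [← smul_mul_smul_comm, ← smul_mul_assoc, rpow_smul_mlTwo_rpow_smul hts,
    rpow_smul_mlTwo_rpow_smul hs.1, tsum_smul_mul_mul_tsum_smul
      (summable_norm_rlKernel_smul_pow hρ a hts A) (summable_norm_rlKernel_smul_pow hρ b hs.1 A)]
  rfl

theorem integrableOn_mlConvTerm (hρ : 0 ≤ ρ) (ha : 0 < a) (hb : 0 < b) (ht : 0 < t) (k : ℕ) :
    IntegrableOn (mlConvTerm A B ρ a b t k) (Set.Ioo 0 t) :=
  integrable_finsetSum _ fun _ _ =>
    (integrableOn_rlKernel_sub_mul_rlKernel (by positivity) (by positivity) ht).smul_const _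

theorem setIntegral_rlKernel_mul_rlKernel_of_mem_antidiagonal (hρ : 0 ≤ ρ) (ha : 0 < a)
    (hb : 0 < b) (ht : 0 < t) {k : ℕ} {p : ℕ × ℕ} (hp : p ∈ antidiagonal k) :
    ∫ s in Set.Ioo 0 t, rlKernel (p.1 * ρ + a) (t - s) * rlKernel (p.2 * ρ + b) s =
      rlKernel (k * ρ + (a + b)) t := by
  rw [setIntegral_rlKernel_sub_mul_rlKernel (by positivity) (by positivity) ht,
    ← mem_antidiagonal.1 hp]
  push_cast
  ring_nf

theorem integral_mlConvTerm [CompleteSpace 𝔸] (hρ : 0 ≤ ρ) (ha : 0 < a) (hb : 0 < b) (ht : 0 < t)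
    (k : ℕ) :
    ∫ s in Set.Ioo 0 t, mlConvTerm A B ρ a b t k s =
      rlKernel (k * ρ + (a + b)) t • ∑ p ∈ antidiagonal k, A ^ p.1 * B * A ^ p.2 := by
  unfold mlConvTerm
  rw [integral_finsetSum _ fun _ _ =>
    (integrableOn_rlKernel_sub_mul_rlKernel (by positivity) (by positivity) ht).smul_const _,
    smul_sum]
  refine sum_congr rfl fun p hp => ?_
  rw [integral_smul_const, setIntegral_rlKernel_mul_rlKernel_of_mem_antidiagonal hρ ha hb ht hp]

theorem integral_norm_mlConvTerm_le (hρ : 0 ≤ ρ) (ha : 0 < a) (hb : 0 < b) (ht : 0 < t)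
    (k : ℕ) : ∫ s in Set.Ioo 0 t, ‖mlConvTerm A B ρ a b t k s‖ ≤
      rlKernel (k * ρ + (a + b)) t * ((k + 1) * ‖A‖ ^ k * ‖B‖) := by
  have hint : ∀ p : ℕ × ℕ, IntegrableOn
      (fun s => rlKernel (p.1 * ρ + a) (t - s) * rlKernel (p.2 * ρ + b) s) (Set.Ioo 0 t) :=
    fun _ => integrableOn_rlKernel_sub_mul_rlKernel (by positivity) (by positivity) ht
  calc ∫ s in Set.Ioo 0 t, ‖mlConvTerm A B ρ a b t k s‖
      ≤ ∫ s in Set.Ioo 0 t, ∑ p ∈ antidiagonal k,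
          rlKernel (p.1 * ρ + a) (t - s) * rlKernel (p.2 * ρ + b) s * ‖A ^ p.1 * B * A ^ p.2‖ := by
        refine setIntegral_mono_on (integrableOn_mlConvTerm A B hρ ha hb ht k).norm
          (integrable_finsetSum _ fun p _ => (hint p).mul_const _) measurableSet_Ioo
          fun s hs => norm_sum_le_of_le _ fun p _ => ?_
        rw [norm_smul, norm_of_nonneg]
        exact mul_nonneg (rlKernel_nonneg (by positivity) (sub_pos.2 hs.2).le)
          (rlKernel_nonneg (by positivity) hs.1.le)
    _ = ∑ p ∈ antidiagonal k, rlKernel (k * ρ + (a + b)) t * ‖A ^ p.1 * B * A ^ p.2‖ := by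
        rw [integral_finsetSum _ fun p _ => (hint p).mul_const _]
        refine sum_congr rfl fun p hp => ?_
        rw [integral_mul_const,
          setIntegral_rlKernel_mul_rlKernel_of_mem_antidiagonal hρ ha hb ht hp]
    _ ≤ ∑ p ∈ antidiagonal k, rlKernel (k * ρ + (a + b)) t * (‖A‖ ^ k * ‖B‖) := by
        refine sum_le_sum fun p hp => mul_le_mul_of_nonneg_left ?_
          (rlKernel_nonneg (by positivity) ht.le)
        calc ‖A ^ p.1 * B * A ^ p.2‖ ≤ ‖A‖ ^ p.1 * ‖B‖ * ‖A‖ ^ p.2 :=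
              (norm_mul_pow_le _ _ _).trans (by gcongr; exact norm_pow_mul_le _ _ _)
          _ = ‖A‖ ^ k * ‖B‖ := by rw [← mem_antidiagonal.1 hp, pow_add]; ring
    _ = rlKernel (k * ρ + (a + b)) t * ((k + 1) * ‖A‖ ^ k * ‖B‖) := by
        rw [sum_const, Nat.card_antidiagonal, nsmul_eq_mul]
        push_cast
        ring

theorem summable_integral_norm_mlConvTerm (hρ : 0 < ρ) (ha : 0 < a) (hb : 0 < b) (ht : 0 < t) :
    Summable fun k => ∫ s in Set.Ioo 0 t, ‖mlConvTerm A B ρ a b t k s‖ := by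
  refine .of_nonneg_of_le (fun _ => integral_nonneg fun _ => norm_nonneg _)
    (integral_norm_mlConvTerm_le A B hρ.le ha hb ht)
    (((summable_succ_mul_pow_div_Gamma_nat_mul_add hρ (t ^ ρ * ‖A‖) (a + b)).mul_left
      (t ^ (a + b - 1) * ‖B‖)).congr fun k => ?_)
  rw [rlKernel_nat_mul_add ht, mul_pow]
  ring

end BanachAlgebra

/-- The convolution integral of two two-parameter Mittag-Leffler operator functions separated
by `B` equals the series `∑_k (∑_{l=0}^k A^{k−l} B A^l) t^{kρ+a+b−1} / Γ(kρ+a+b)`. -/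
theorem mlTwo_convolution {𝔸 : Type*} [NormedRing 𝔸] [NormedAlgebra ℝ 𝔸] [CompleteSpace 𝔸]
    (A B : 𝔸) (ρ a b : ℝ) (hρ : 0 < ρ) (ha : 0 < a) (hb : 0 < b) (t : ℝ) (ht : 0 < t) :
    ∫ s in (0:ℝ)..t, ((t - s) ^ (a - 1) * s ^ (b - 1)) •
        (mlTwo ρ a (((t - s) ^ ρ) • A) * B * mlTwo ρ b ((s ^ ρ) • A))
      = ∑' k : ℕ, (t ^ ((k : ℝ) * ρ + a + b - 1) / Real.Gamma ((k : ℝ) * ρ + a + b)) •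
          (∑ l ∈ Finset.range (k + 1), A ^ (k - l) * B * A ^ l) := by
  rw [intervalIntegral.integral_of_le ht.le, integral_Ioc_eq_integral_Ioo,
    setIntegral_congr_fun measurableSet_Ioo
      fun s hs => smul_mlTwo_mul_mlTwo_eq_tsum_mlConvTerm A B hρ hs,
    ← integral_tsum_of_summable_integral_norm (integrableOn_mlConvTerm A B hρ.le ha hb ht)
      (summable_integral_norm_mlConvTerm A B hρ ha hb ht)]
  refine tsum_congr fun k => ?_
  rw [integral_mlConvTerm A B hρ.le ha hb ht, sum_antidiagonal_pow_mul_mul_pow, rlKernel,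
    ← add_assoc]
end

section
/- Let A, B be elements of a Banach algebra with identity I, let α > β > 0 and γ < α be real, let m ∈ ℕ, and let s > 0 be real with s^{α−β} > ‖A‖ (so that s^{α−β}I − A is invertible). Then the Bochner integral over (0,∞) satisfies ∫₀^∞ e^{−st} [ ∑_{k=0}^∞ Q_{k,m}^{A,B} t^{k(α−β)+mα+α−γ−1} / Γ(k(α−β)+mα+α−γ) ] dt = s^{γ−(m+1)β} · ((s^{α−β}I − A)^{−1} B)^{m} · (s^{α−β}I − A)^{−1}. -/
/-!
Write `r k = k(α - β) + mα + α - γ`. The `k`-th term of the series is a multiple of the Gamma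
kernel `t^(r k - 1) / Γ(r k)`, whose Laplace transform at `s` is `s^(-r k)`. The integrals of
the norms of the terms are summable, so integral and sum may be interchanged, which leaves
`s^(γ - (m + 1)α) ∑ₖ xᵏ Q_{k,m}` with `x = s^(-(α - β))`. Since `xᵏ Q_{k,m}^{A,B} = Q_{k,m}^{xA,B}`
and the recursion defining `Q` is a Cauchy product with the geometric series of `A`, this
generating function is `((1 - xA)⁻¹ B)^m (1 - xA)⁻¹`; rescaling `1 - xA` by `s^(α - β)` gives
the resolvent of `A`.
-/

open MeasureTheory

open Finset

section Algebraic

variable {𝔸 : Type*} [Ring 𝔸]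

theorem Q_succ_eq_sum_antidiagonal (A B : 𝔸) (k m : ℕ) :
    Q A B k (m + 1) = ∑ ij ∈ antidiagonal k, A ^ ij.1 * (B * Q A B ij.2 m) := by
  rw [← Nat.sum_antidiagonal_swap]
  simp only [Prod.fst_swap, Prod.snd_swap]
  rw [Nat.sum_antidiagonal_eq_sum_range_succ (fun i j => A ^ j * (B * Q A B i m))]
  simp only [Q, mul_assoc]

theorem Q_smul_left {𝕜 : Type*} [CommSemiring 𝕜] [Algebra 𝕜 𝔸] (x : 𝕜) (A B : 𝔸) (k m : ℕ) :
    Q (x • A) B k m = x ^ k • Q A B k m := by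
  induction m generalizing k with
  | zero => exact smul_pow ..
  | succ m ih =>
    simp only [Q_succ_eq_sum_antidiagonal, ih, Finset.smul_sum]
    refine sum_congr rfl fun ij hij => ?_
    rw [smul_pow, mul_smul_comm, mul_smul_comm, smul_mul_assoc, smul_smul, ← pow_add, add_comm,
      mem_antidiagonal.mp hij]

theorem Ring.inverse_smul {𝕜 : Type*} [Field 𝕜] [Algebra 𝕜 𝔸] {c : 𝕜} (hc : c ≠ 0) (a : 𝔸) :
    Ring.inverse (c • a) = c⁻¹ • Ring.inverse a := by
  have hunit : IsUnit (algebraMap 𝕜 𝔸 c) := (IsUnit.mk0 c hc).map _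
  have hinv : Ring.inverse (algebraMap 𝕜 𝔸 c) = algebraMap 𝕜 𝔸 c⁻¹ := by
    simpa using (Ring.inverse_mul_eq_iff_eq_mul _ 1 _ hunit).mpr
      (by rw [← map_mul, mul_inv_cancel₀ hc, map_one])
  rw [Algebra.smul_def, Ring.inverse_mul (Or.inl hunit), hinv, Algebra.smul_def,
    Algebra.commutes]

end Algebraic

section Normed

variable {𝔸 : Type*} [NormedRing 𝔸]

theorem Summable.norm_mul_left {ι : Type*} {f : ι → 𝔸} (a : 𝔸) (hf : Summable fun i => ‖f i‖) :
    Summable fun i => ‖a * f i‖ :=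
  (hf.mul_left ‖a‖).of_nonneg_of_le (fun _ => norm_nonneg _) fun _ => norm_mul_le _ _

theorem summable_norm_Q {A : 𝔸} (hA : ‖A‖ < 1) (B : 𝔸) (m : ℕ) :
    Summable fun k => ‖Q A B k m‖ := by
  induction m with
  | zero => exact summable_norm_geometric_of_norm_lt_one hA
  | succ m ih =>
    simp only [Q_succ_eq_sum_antidiagonal]
    exact summable_norm_sum_mul_antidiagonal_of_summable_norm (f := fun i => A ^ i)
      (g := fun j => B * Q A B j m) (summable_norm_geometric_of_norm_lt_one hA) (ih.norm_mul_left B)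

theorem tsum_Q [CompleteSpace 𝔸] {A : 𝔸} (hA : ‖A‖ < 1) (B : 𝔸) (m : ℕ) :
    ∑' k, Q A B k m = (Ring.inverse (1 - A) * B) ^ m * Ring.inverse (1 - A) := by
  induction m with
  | zero => simpa [Q] using geom_series_eq_inverse A hA
  | succ m ih =>
    simp only [Q_succ_eq_sum_antidiagonal]
    rw [← tsum_mul_tsum_eq_tsum_sum_antidiagonal_of_summable_norm (f := (A ^ ·))
      (summable_norm_geometric_of_norm_lt_one hA) ((summable_norm_Q hA B m).norm_mul_left B),
      geom_series_eq_inverse A hA,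
      (summable_norm_Q hA B m).of_norm.tsum_mul_left, ih, pow_succ', mul_assoc, mul_assoc]

end Normed

section Laplace

open Real Set

theorem integral_exp_neg_mul_mul_rpow_sub_one_div_Gamma {r s : ℝ} (hr : 0 < r) (hs : 0 < s) :
    ∫ t in Ioi 0, exp (-(s * t)) * (t ^ (r - 1) / Gamma r) = s ^ (-r) := by
  simp_rw [mul_div_assoc', mul_comm (exp _)]
  rw [integral_div, integral_rpow_mul_exp_neg_mul_Ioi hr hs, mul_div_cancel_right₀ _
    (Gamma_pos_of_pos hr).ne', one_div, inv_rpow hs.le, rpow_neg hs.le]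

theorem integrableOn_exp_neg_mul_mul_rpow_sub_one_div_Gamma {r s : ℝ} (hr : 0 < r) (hs : 0 < s) :
    IntegrableOn (fun t => exp (-(s * t)) * (t ^ (r - 1) / Gamma r)) (Ioi 0) := by
  have h : IntegrableOn (fun t => t ^ (r - 1) * exp (-(s * t))) (Ioi 0) := by
    simpa [neg_mul] using
      integrableOn_rpow_mul_exp_neg_mul_rpow (by linarith : -1 < r - 1) one_pos hs
  exact IntegrableOn.congr_fun (h.div_const (Gamma r)) (fun t _ => by ring) measurableSet_Ioi

theorem integral_exp_neg_mul_smul_tsum_rpow_div_Gamma_smul {E : Type*} [NormedAddCommGroup E]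
    [NormedSpace ℝ E] [CompleteSpace E] {s : ℝ} (hs : 0 < s) {r : ℕ → ℝ} (hr : ∀ k, 0 < r k)
    {a : ℕ → E} (ha : Summable fun k => s ^ (-r k) * ‖a k‖) :
    ∫ t in Ioi 0, exp (-(s * t)) • ∑' k, (t ^ (r k - 1) / Gamma (r k)) • a k =
      ∑' k, s ^ (-r k) • a k := by
  set K : ℕ → ℝ → ℝ := fun k t => exp (-(s * t)) * (t ^ (r k - 1) / Gamma (r k))
  have hK_nonneg : ∀ k, ∀ t ∈ Ioi (0 : ℝ), 0 ≤ K k t := fun k t ht =>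
    mul_nonneg (exp_pos _).le (div_nonneg (rpow_nonneg (le_of_lt ht) _)
      (Gamma_pos_of_pos (hr k)).le)
  have hK_norm : ∀ k, ∫ t in Ioi 0, ‖K k t • a k‖ = s ^ (-r k) * ‖a k‖ := fun k => by
    rw [setIntegral_congr_fun measurableSet_Ioi fun t ht => by
        rw [norm_smul, Real.norm_of_nonneg (hK_nonneg k t ht)],
      integral_mul_const, integral_exp_neg_mul_mul_rpow_sub_one_div_Gamma (hr k) hs]
  calc ∫ t in Ioi 0, exp (-(s * t)) • ∑' k, (t ^ (r k - 1) / Gamma (r k)) • a k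
      = ∫ t in Ioi 0, ∑' k, K k t • a k := by
        simp only [K, ← tsum_const_smul'', smul_smul]
    _ = ∑' k, ∫ t in Ioi 0, K k t • a k :=
        (integral_tsum_of_summable_integral_norm
          (fun k => (integrableOn_exp_neg_mul_mul_rpow_sub_one_div_Gamma (hr k) hs).smul_const _)
          (ha.congr fun k => (hK_norm k).symm)).symm
    _ = ∑' k, s ^ (-r k) • a k := by
        simp only [K, integral_smul_const,
          integral_exp_neg_mul_mul_rpow_sub_one_div_Gamma (hr _) hs]

end Laplace

theorem laplace_Q_series_general {𝔸 : Type*} [NormedRing 𝔸] [NormedAlgebra ℝ 𝔸]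
    [CompleteSpace 𝔸] (A B : 𝔸) (α β γ : ℝ) (hβ : 0 < β) (hαβ : β < α) (hγ : γ < α)
    (m : ℕ) (s : ℝ) (hs : 0 < s) (hA : ‖A‖ < s ^ (α - β)) :
    IsUnit (s ^ (α - β) • (1 : 𝔸) - A) ∧
    ∫ t in Set.Ioi (0 : ℝ), Real.exp (-(s * t)) •
        (∑' k : ℕ, (t ^ ((k : ℝ) * (α - β) + (m : ℝ) * α + α - γ - 1) /
          Real.Gamma ((k : ℝ) * (α - β) + (m : ℝ) * α + α - γ)) • Q A B k m)
      = (s ^ (γ - ((m : ℝ) + 1) * β)) •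
          ((Ring.inverse (s ^ (α - β) • (1 : 𝔸) - A) * B) ^ m *
            Ring.inverse (s ^ (α - β) • (1 : 𝔸) - A)) := by
  set c := s ^ (α - β)
  have hc : 0 < c := Real.rpow_pos_of_pos hs _
  have hcA : ‖c⁻¹ • A‖ < 1 := by
    rwa [norm_smul, norm_inv, Real.norm_of_nonneg hc.le, inv_mul_lt_iff₀ hc, mul_one]
  have hres : c • (1 : 𝔸) - A = c • (1 - c⁻¹ • A) := by rw [smul_sub, smul_inv_smul₀ hc.ne']
  have hc_pow (n : ℕ) : c⁻¹ ^ n = s ^ (-(α - β) * n) := by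
    rw [Real.rpow_mul hs.le, Real.rpow_natCast, Real.rpow_neg hs.le]
  have hr (k : ℕ) : 0 < (k : ℝ) * (α - β) + m * α + α - γ := by
    have := mul_nonneg k.cast_nonneg (sub_nonneg.2 hαβ.le)
    have := mul_nonneg m.cast_nonneg (hβ.trans hαβ).le
    linarith
  have hterm (k : ℕ) : s ^ (-((k : ℝ) * (α - β) + m * α + α - γ)) • Q A B k m =
      s ^ (γ - (m + 1) * α) • Q (c⁻¹ • A) B k m := by
    rw [Q_smul_left, smul_smul, hc_pow, ← Real.rpow_add hs]
    ring_nf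
  refine ⟨hres ▸ (isUnit_one_sub_of_norm_lt_one hcA).smul (Units.mk0 c hc.ne'), ?_⟩
  have hsum : Summable fun k : ℕ =>
      s ^ (-((k : ℝ) * (α - β) + m * α + α - γ)) * ‖Q A B k m‖ := by
    refine ((summable_norm_Q hcA B m).mul_left (s ^ (γ - (m + 1) * α))).congr fun k => ?_
    rw [← norm_smul_of_nonneg (Real.rpow_nonneg hs.le _), ← hterm,
      norm_smul_of_nonneg (Real.rpow_nonneg hs.le _)]
  calc _ = ∑' k : ℕ, s ^ (-((k : ℝ) * (α - β) + m * α + α - γ)) • Q A B k m :=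
        integral_exp_neg_mul_smul_tsum_rpow_div_Gamma_smul hs hr hsum
    _ = s ^ (γ - (m + 1) * α) • ((Ring.inverse (1 - c⁻¹ • A) * B) ^ m *
          Ring.inverse (1 - c⁻¹ • A)) := by
        rw [tsum_congr hterm, tsum_const_smul'', tsum_Q hcA]
    _ = _ := by
        rw [hres, Ring.inverse_smul hc.ne', smul_mul_assoc, smul_pow, smul_mul_assoc,
          mul_smul_comm, smul_smul, smul_smul, mul_assoc, ← pow_succ, hc_pow, ← Real.rpow_add hs]
        congr 2
        push_cast
        ring

/-- Laplace transform identity (Lemma 3.2 of the paper): for `s^{α−β} > ‖A‖`,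
`s^{α−β}I − A` is invertible and
`∫₀^∞ e^{−st} ∑_k Q_{k,m}^{A,B} t^{k(α−β)+mα+α−γ−1}/Γ(k(α−β)+mα+α−γ) dt
  = s^{γ−(m+1)β} ((s^{α−β}I − A)^{−1} B)^m (s^{α−β}I − A)^{−1}`. -/
theorem laplace_Q_series {𝔸 : Type*} [NormedRing 𝔸] [NormOneClass 𝔸] [NormedAlgebra ℝ 𝔸]
    [CompleteSpace 𝔸] (A B : 𝔸) (α β γ : ℝ) (hβ : 0 < β) (hαβ : β < α) (hγ : γ < α)
    (m : ℕ) (s : ℝ) (hs : 0 < s) (hA : ‖A‖ < s ^ (α - β)) :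
    IsUnit (s ^ (α - β) • (1 : 𝔸) - A) ∧
    ∫ t in Set.Ioi (0 : ℝ), Real.exp (-(s * t)) •
        (∑' k : ℕ, (t ^ ((k : ℝ) * (α - β) + (m : ℝ) * α + α - γ - 1) /
          Real.Gamma ((k : ℝ) * (α - β) + (m : ℝ) * α + α - γ)) • Q A B k m)
      = (s ^ (γ - ((m : ℝ) + 1) * β)) •
          ((Ring.inverse (s ^ (α - β) • (1 : 𝔸) - A) * B) ^ m *
            Ring.inverse (s ^ (α - β) • (1 : 𝔸) - A)) :=
  laplace_Q_series_general A B α β γ hβ hαβ hγ m s hs hA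
end

section
/- Let A, B be elements of a Banach algebra with identity I satisfying AB = BA, let α > β > 0 be real, let m ∈ ℕ, let γ < (m+1)α be real, and let s > 0 be real with s^{α−β} > ‖A‖ (so that s^{α}I − A s^{β} is invertible). Then the Bochner integral over (0,∞) satisfies ∫₀^∞ e^{−st} t^{(m+1)α−γ−1} E_{α−β,(m+1)α−γ}^{m+1}(A t^{α−β}) B^{m} dt = s^{γ} B^{m} ((s^{α}I − A s^{β})^{−1})^{m+1}. -/
/-!
Write `a = α - β` and `c = (m+1)α - γ`. Expand the Mittag-Leffler function into its series and
integrate term by term: the Euler integral `∫₀^∞ e^{-st} t^{ka+c-1} dt = Γ(ka+c) / s^{ka+c}`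
cancels the Gamma factor of the `k`-th coefficient, leaving `s^{-c} ∑ C(k+m, m) (s^{-a} A)^k B^m`,
the binomial series of `s^{-c} (1 - s^{-a} A)^{-(m+1)} B^m`; since
`s^α I - s^β A = s^α (1 - s^{-a} A)`, this is the right-hand side. Interchanging sum and integral
is justified by `‖s^{-a} A‖ < 1`, and the series converges for every `t` because
`Γ(x) ≥ T^{x-1} e^{-T}` for all `T > 0`, which beats any geometric growth.
-/

open MeasureTheory

/-- The operator-valued three-parameter (Prabhakar) Mittag-Leffler function
`E_{a,c}^{m+1}(T) = ∑_{k=0}^∞ C(k+m, m) T^k / Γ(ka+c)`. -/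
noncomputable def mlThree {𝔸 : Type*} [NormedRing 𝔸] [NormedAlgebra ℝ 𝔸]
    (a c : ℝ) (m : ℕ) (T : 𝔸) : 𝔸 :=
  ∑' k : ℕ, (((k + m).choose m : ℝ) / Real.Gamma ((k : ℝ) * a + c)) • T ^ k

open Filter Real Set

lemma Real.rpow_sub_one_mul_exp_neg_le_Gamma {x T : ℝ} (hx : 1 ≤ x) (hT : 0 < T) :
    T ^ (x - 1) * exp (-T) ≤ Gamma x := by
  have hΓ := GammaIntegral_convergent (zero_lt_one.trans_le hx)
  calc T ^ (x - 1) * exp (-T) = ∫ t in Ioi T, exp (-t) * T ^ (x - 1) := by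
        rw [integral_mul_const, integral_exp_neg_Ioi, mul_comm]
    _ ≤ ∫ t in Ioi T, exp (-t) * t ^ (x - 1) :=
        setIntegral_mono_on ((integrableOn_exp_neg_Ioi T).mul_const _)
          (hΓ.mono_set (Ioi_subset_Ioi hT.le)) measurableSet_Ioi fun t ht =>
            mul_le_mul_of_nonneg_left (rpow_le_rpow hT.le (le_of_lt ht) (by linarith))
              (exp_pos _).le
    _ ≤ ∫ t in Ioi 0, exp (-t) * t ^ (x - 1) :=
        setIntegral_mono_set hΓ
          ((ae_restrict_mem measurableSet_Ioi).mono fun t (ht : 0 < t) =>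
            (mul_pos (exp_pos _) (rpow_pos_of_pos ht _)).le)
          (Ioi_subset_Ioi hT.le).eventuallyLE
    _ = Gamma x := (Gamma_eq_integral (zero_lt_one.trans_le hx)).symm

lemma Real.one_div_rpow_natCast_mul_add {s : ℝ} (hs : 0 < s) (k : ℕ) (a c : ℝ) :
    (1 / s) ^ (k * a + c) = ((s ^ a)⁻¹) ^ k * (s ^ c)⁻¹ := by
  rw [one_div, rpow_add (inv_pos.mpr hs), mul_comm (k : ℝ), rpow_mul (inv_pos.mpr hs).le,
    rpow_natCast, inv_rpow hs.le, inv_rpow hs.le]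

lemma summable_choose_div_Gamma_mul_pow (m : ℕ) {a : ℝ} (ha : 0 < a) (c : ℝ) {R : ℝ}
    (hR : 0 ≤ R) :
    Summable fun k : ℕ => ((k + m).choose m : ℝ) / Gamma (k * a + c) * R ^ k := by
  -- `T ^ a = R + 1` turns `Γ(x) ≥ T^{x-1} e^{-T}` into a binomial series of ratio `R / (R + 1)`.
  set T := (R + 1) ^ a⁻¹
  have hT : 0 < T := by positivity
  have hTa : T ^ a = R + 1 := by rw [← rpow_mul (by positivity), inv_mul_cancel₀ ha.ne', rpow_one]
  have hρ : ‖R / (R + 1)‖ < 1 := by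
    rw [norm_div, Real.norm_of_nonneg hR, Real.norm_of_nonneg (by positivity),
      div_lt_one (by positivity)]
    linarith
  have hgeom := (summable_choose_mul_geometric_of_norm_lt_one m hρ).mul_left (exp T * T ^ (1 - c))
  refine hgeom.of_norm_bounded_eventually_nat ?_
  have hlarge : ∀ᶠ k : ℕ in atTop, 1 ≤ k * a + c :=
    ((tendsto_natCast_atTop_atTop.atTop_mul_const ha).atTop_add
      tendsto_const_nhds).eventually_ge_atTop 1
  filter_upwards [hlarge] with k hk
  have hΓ := rpow_sub_one_mul_exp_neg_le_Gamma hk hT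
  have hpow : T ^ (k * a + c - 1) = (R + 1) ^ k * T ^ (c - 1) := by
    rw [show (k : ℝ) * a + c - 1 = a * k + (c - 1) by ring, rpow_add hT, rpow_mul hT.le, hTa,
      rpow_natCast]
  rw [Real.norm_of_nonneg (by positivity), div_mul_eq_mul_div,
    div_le_iff₀ (hΓ.trans_lt' (by positivity))]
  calc ((k + m).choose m : ℝ) * R ^ k
      = exp T * T ^ (1 - c) * ((k + m).choose m * (R / (R + 1)) ^ k) *
          (T ^ (k * a + c - 1) * exp (-T)) := by
        rw [hpow, div_pow, mul_comm (exp T), exp_neg]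
        field_simp
        rw [mul_assoc, ← rpow_add hT]
        simp
    _ ≤ _ := by gcongr

lemma integral_Ioi_tsum_rpow_mul_exp_neg_mul_smul {E : Type*} [NormedAddCommGroup E]
    [NormedSpace ℝ E] [CompleteSpace E] {p : ℕ → ℝ} {s : ℝ} (hp : ∀ k, 0 < p k) (hs : 0 < s)
    {v : ℕ → E} (hv : Summable fun k => (1 / s) ^ p k * Gamma (p k) * ‖v k‖) :
    ∫ t in Ioi 0, ∑' k, (t ^ (p k - 1) * exp (-(s * t))) • v k =
      ∑' k, ((1 / s) ^ p k * Gamma (p k)) • v k := by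
  have hint (k : ℕ) : IntegrableOn (fun t => t ^ (p k - 1) * exp (-(s * t))) (Ioi 0) := by
    simpa using integrableOn_rpow_mul_exp_neg_mul_rpow (p := 1) (by linarith [hp k]) one_pos hs
  have hnorm (k : ℕ) : ∫ t in Ioi 0, ‖(t ^ (p k - 1) * exp (-(s * t))) • v k‖ =
      (1 / s) ^ p k * Gamma (p k) * ‖v k‖ := by
    rw [← integral_rpow_mul_exp_neg_mul_Ioi (hp k) hs, ← integral_mul_const]
    refine setIntegral_congr_fun measurableSet_Ioi fun t (ht : 0 < t) => ?_
    rw [norm_smul, Real.norm_of_nonneg (by positivity)]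
  rw [← integral_tsum_of_summable_integral_norm (fun k => (hint k).smul_const (v k))
    (by simpa only [hnorm] using hv)]
  simp_rw [integral_smul_const, integral_rpow_mul_exp_neg_mul_Ioi (hp _) hs]

lemma norm_inv_smul_lt_one {E : Type*} [SeminormedAddCommGroup E] [NormedSpace ℝ E] {r : ℝ}
    (hr : 0 < r) {v : E} (hv : ‖v‖ < r) : ‖r⁻¹ • v‖ < 1 := by
  rwa [norm_smul, norm_inv, Real.norm_of_nonneg hr.le, inv_mul_lt_iff₀ hr, mul_one]

lemma Ring.inverse_smul_s12 {𝕜 R : Type*} [Field 𝕜] [Ring R] [Algebra 𝕜 R] (r : 𝕜) (u : R) :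
    Ring.inverse (r • u) = r⁻¹ • Ring.inverse u := by
  rcases eq_or_ne r 0 with rfl | hr
  · simp
  have hr' : IsUnit (algebraMap 𝕜 R r) := (IsUnit.mk0 r hr).map _
  have hinv : Ring.inverse (algebraMap 𝕜 R r) = algebraMap 𝕜 R r⁻¹ := by
    simpa using (Ring.inverse_mul_eq_iff_eq_mul _ 1 _ hr').mpr
      (by rw [← map_mul, mul_inv_cancel₀ hr, map_one])
  rw [Algebra.smul_def, Ring.inverse_mul (Or.inl hr'), hinv, Algebra.smul_def, Algebra.commutes]

section MittagLeffler

variable {𝔸 : Type*} [NormedRing 𝔸] [NormedAlgebra ℝ 𝔸]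

lemma summable_norm_mlThree (m : ℕ) {a : ℝ} (ha : 0 < a) (c : ℝ) (T : 𝔸) :
    Summable fun k : ℕ => ‖(((k + m).choose m : ℝ) / Gamma (k * a + c)) • T ^ k‖ := by
  refine (summable_choose_div_Gamma_mul_pow m ha c
    (norm_nonneg T)).abs.of_norm_bounded_eventually_nat ?_
  filter_upwards [eventually_norm_pow_le T] with k hk
  rw [norm_norm, norm_smul, Real.norm_eq_abs, abs_mul,
    abs_of_nonneg (pow_nonneg (norm_nonneg T) k)]
  gcongr

lemma hasSum_mlThree [CompleteSpace 𝔸] (m : ℕ) {a : ℝ} (ha : 0 < a) (c : ℝ) (T : 𝔸) :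
    HasSum (fun k : ℕ => (((k + m).choose m : ℝ) / Gamma (k * a + c)) • T ^ k)
      (mlThree a c m T) :=
  (summable_norm_mlThree m ha c T).of_norm.hasSum

lemma laplace_rpow_smul_mlThree_mul [CompleteSpace 𝔸] (m : ℕ) {a c s : ℝ} (ha : 0 < a)
    (hc : 0 < c) (hs : 0 < s) {T : 𝔸} (hT : ‖T‖ < s ^ a) (D : 𝔸) :
    ∫ t in Ioi 0, exp (-(s * t)) • (t ^ (c - 1) • (mlThree a c m (t ^ a • T) * D)) =
      (s ^ c)⁻¹ • (Ring.inverse (1 - (s ^ a)⁻¹ • T) ^ (m + 1) * D) := by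
  set x : 𝔸 := (s ^ a)⁻¹ • T
  have hsa : 0 < s ^ a := by positivity
  have hx : ‖x‖ < 1 := norm_inv_smul_lt_one hsa hT
  have hΓ (k : ℕ) : Gamma (k * a + c) ≠ 0 := (Gamma_pos_of_pos (by positivity)).ne'
  have hseries : ∀ t ∈ Ioi (0 : ℝ),
      exp (-(s * t)) • (t ^ (c - 1) • (mlThree a c m (t ^ a • T) * D)) =
        ∑' k : ℕ, (t ^ (k * a + c - 1) * exp (-(s * t))) •
          ((((k + m).choose m : ℝ) / Gamma (k * a + c)) • T ^ k * D) := by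
    intro t (ht : 0 < t)
    rw [← ((((hasSum_mlThree m ha c (t ^ a • T)).mul_right D).const_smul (t ^ (c - 1))).const_smul
      (exp (-(s * t)))).tsum_eq]
    refine tsum_congr fun k => ?_
    have ht_pow : t ^ (c - 1) * (t ^ a) ^ k = t ^ (k * a + c - 1) := by
      rw [← rpow_natCast, ← rpow_mul ht.le, ← rpow_add ht]
      ring_nf
    simp only [smul_pow, smul_mul_assoc, smul_smul]
    congr 1
    rw [← ht_pow]
    ring
  have hsum : Summable fun k : ℕ => (1 / s) ^ (k * a + c) * Gamma (k * a + c) *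
      ‖(((k + m).choose m : ℝ) / Gamma (k * a + c)) • T ^ k * D‖ := by
    have hρ : ‖‖x‖‖ < 1 := by rwa [norm_norm]
    refine ((summable_choose_mul_geometric_of_norm_lt_one m hρ).mul_left
      ((s ^ c)⁻¹ * ‖D‖)).of_norm_bounded_eventually_nat ?_
    filter_upwards [eventually_norm_pow_le T] with k hk
    rw [Real.norm_of_nonneg (by positivity), one_div_rpow_natCast_mul_add hs,
      norm_smul, norm_inv, Real.norm_of_nonneg hsa.le]
    calc ((s ^ a)⁻¹) ^ k * (s ^ c)⁻¹ * Gamma (k * a + c) *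
          ‖(((k + m).choose m : ℝ) / Gamma (k * a + c)) • T ^ k * D‖
        ≤ ((s ^ a)⁻¹) ^ k * (s ^ c)⁻¹ * Gamma (k * a + c) *
          ((((k + m).choose m : ℝ) / Gamma (k * a + c)) * ‖T‖ ^ k * ‖D‖) := by
          gcongr
          refine (norm_mul_le _ _).trans ?_
          rw [norm_smul, Real.norm_of_nonneg (by positivity)]
          gcongr
      _ = (s ^ c)⁻¹ * ‖D‖ * ((k + m).choose m * ((s ^ a)⁻¹ * ‖T‖) ^ k) := by
          field_simp [hΓ k]
          ring
  rw [setIntegral_congr_fun measurableSet_Ioi hseries,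
    integral_Ioi_tsum_rpow_mul_exp_neg_mul_smul (fun k => by positivity) hs hsum,
    ← (((hasSum_choose_mul_geometric_of_norm_lt_one' m hx).mul_right D).const_smul
      (s ^ c)⁻¹).tsum_eq]
  refine tsum_congr fun k => ?_
  rw [← nsmul_eq_mul ((k + m).choose m), ← Nat.cast_smul_eq_nsmul ℝ, smul_pow,
    one_div_rpow_natCast_mul_add hs]
  simp only [smul_mul_assoc, smul_smul]
  congr 1
  field_simp [hΓ k]

end MittagLeffler

theorem laplace_mlThree_general {𝔸 : Type*} [NormedRing 𝔸] [NormedAlgebra ℝ 𝔸]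
    [CompleteSpace 𝔸] (A B : 𝔸) (hAB : A * B = B * A) (α β : ℝ) (hαβ : β < α)
    (m : ℕ) (γ : ℝ) (hγ : γ < ((m : ℝ) + 1) * α) (s : ℝ) (hs : 0 < s)
    (hA : ‖A‖ < s ^ (α - β)) :
    IsUnit (s ^ α • (1 : 𝔸) - s ^ β • A) ∧
    ∫ t in Set.Ioi (0 : ℝ), Real.exp (-(s * t)) •
        ((t ^ (((m : ℝ) + 1) * α - γ - 1)) •
          (mlThree (α - β) (((m : ℝ) + 1) * α - γ) m ((t ^ (α - β)) • A) * B ^ m))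
      = (s ^ γ) • (B ^ m * (Ring.inverse (s ^ α • (1 : 𝔸) - s ^ β • A)) ^ (m + 1)) := by
  have hsa : 0 < s ^ (α - β) := by positivity
  have hx : ‖(s ^ (α - β))⁻¹ • A‖ < 1 := norm_inv_smul_lt_one hsa hA
  have hfactor : s ^ α • (1 : 𝔸) - s ^ β • A = s ^ α • (1 - (s ^ (α - β))⁻¹ • A) := by
    rw [smul_sub, smul_smul, ← rpow_neg hs.le, ← rpow_add hs]
    ring_nf
  have hcomm : Commute (B ^ m) (Ring.inverse (1 - (s ^ (α - β))⁻¹ • A) ^ (m + 1)) := by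
    have hB : Commute B (1 - (s ^ (α - β))⁻¹ • A) :=
      (Commute.one_right B).sub_right ((show Commute B A from hAB.symm).smul_right _)
    rw [Ring.inverse_of_isUnit (isUnit_one_sub_of_norm_lt_one hx)]
    exact hB.units_inv_right.pow_pow m (m + 1)
  have hscalar : s ^ γ * ((s ^ α)⁻¹) ^ (m + 1) = (s ^ (((m : ℝ) + 1) * α - γ))⁻¹ := by
    rw [inv_pow, ← rpow_natCast, ← rpow_mul hs.le, ← div_eq_mul_inv, ← rpow_sub hs,
      ← rpow_neg hs.le]
    push_cast
    ring_nf
  refine ⟨hfactor ▸ (isUnit_one_sub_of_norm_lt_one hx).smul (Units.mk0 (s ^ α) (by positivity)),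
    ?_⟩
  rw [laplace_rpow_smul_mlThree_mul m (sub_pos.mpr hαβ) (sub_pos.mpr hγ) hs hA (B ^ m), hfactor,
    Ring.inverse_smul_s12, smul_pow, mul_smul_comm, smul_smul, hscalar, hcomm.eq]

/-- Laplace transform identity (Theorem 4.1 of the paper): for commuting `A`, `B` and
`s^{α−β} > ‖A‖`, `s^α I − A s^β` is invertible and
`∫₀^∞ e^{−st} t^{(m+1)α−γ−1} E_{α−β,(m+1)α−γ}^{m+1}(A t^{α−β}) B^m dt
  = s^γ B^m ((s^α I − A s^β)^{−1})^{m+1}`. -/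
theorem laplace_mlThree {𝔸 : Type*} [NormedRing 𝔸] [NormOneClass 𝔸] [NormedAlgebra ℝ 𝔸]
    [CompleteSpace 𝔸] (A B : 𝔸) (hAB : A * B = B * A) (α β : ℝ) (hβ : 0 < β) (hαβ : β < α)
    (m : ℕ) (γ : ℝ) (hγ : γ < ((m : ℝ) + 1) * α) (s : ℝ) (hs : 0 < s)
    (hA : ‖A‖ < s ^ (α - β)) :
    IsUnit (s ^ α • (1 : 𝔸) - s ^ β • A) ∧
    ∫ t in Set.Ioi (0 : ℝ), Real.exp (-(s * t)) •
        ((t ^ (((m : ℝ) + 1) * α - γ - 1)) •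
          (mlThree (α - β) (((m : ℝ) + 1) * α - γ) m ((t ^ (α - β)) • A) * B ^ m))
      = (s ^ γ) • (B ^ m * (Ring.inverse (s ^ α • (1 : 𝔸) - s ^ β • A)) ^ (m + 1)) :=
  laplace_mlThree_general A B hAB α β hαβ m γ hγ s hs hA
end
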